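/- Let (F_k, m_k) be a DBM-sequence which is free of deep contradictions and let φ ∈ SL. If there exists j ∈ ℕ such that F_j is {φ}-closed, then B_k(φ) = B_j(φ) for every k ≥ j. -/
import Mathlib


/-!
Common framework: Depth-Bounded Boolean Logics, depth-bounded trees/forests,
mass functions and depth-bounded belief functions.
-/

namespace DBB

/-- Sentences of a propositional language with propositional variables in `V`,
connectives ¬, ∧, ∨ and the constant ⊥. -/
inductive Sentence (V : Type) : Type
  | var  : V → Sentence V
  | bot  : Sentence V
  | neg  : Sentence V → Sentence V
  | conj : Sentence V → Sentence V → Sentence V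
  | disj : Sentence V → Sentence V → Sentence V
  deriving DecidableEq

variable {V : Type}

/-- Boolean evaluation of a sentence under a valuation of the variables. -/
def eval (v : V → Bool) : Sentence V → Bool
  | .var p => v p
  | .bot => false
  | .neg φ => !(eval v φ)
  | .conj φ ψ => eval v φ && eval v ψ
  | .disj φ ψ => eval v φ || eval v ψ

/-- Classical (semantic) consequence `Γ ⊢ φ`. -/
def CC (Γ : Set (Sentence V)) (φ : Sentence V) : Prop :=
  ∀ v : V → Bool, (∀ γ ∈ Γ, eval v γ = true) → eval v φ = true

/-- The 0-depth consequence relation `Γ ⊢₀ φ`: closure of `Γ` under the standard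
introduction and elimination rules for ¬, ∧, ∨, ⊥. -/
inductive Der0 : Set (Sentence V) → Sentence V → Prop
  | prem {Γ : Set (Sentence V)} {φ} (h : φ ∈ Γ) : Der0 Γ φ
  | andI {Γ φ ψ} : Der0 Γ φ → Der0 Γ ψ → Der0 Γ (.conj φ ψ)
  | andE1 {Γ φ ψ} : Der0 Γ (.conj φ ψ) → Der0 Γ φ
  | andE2 {Γ φ ψ} : Der0 Γ (.conj φ ψ) → Der0 Γ ψ
  | orI1 {Γ φ ψ} : Der0 Γ φ → Der0 Γ (.disj φ ψ)
  | orI2 {Γ φ ψ} : Der0 Γ ψ → Der0 Γ (.disj φ ψ)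
  | orE1 {Γ φ ψ} : Der0 Γ (.disj φ ψ) → Der0 Γ (.neg φ) → Der0 Γ ψ
  | orE2 {Γ φ ψ} : Der0 Γ (.disj φ ψ) → Der0 Γ (.neg ψ) → Der0 Γ φ
  | negAndI1 {Γ φ ψ} : Der0 Γ (.neg φ) → Der0 Γ (.neg (.conj φ ψ))
  | negAndI2 {Γ φ ψ} : Der0 Γ (.neg ψ) → Der0 Γ (.neg (.conj φ ψ))
  | negAndE1 {Γ φ ψ} : Der0 Γ (.neg (.conj φ ψ)) → Der0 Γ φ → Der0 Γ (.neg ψ)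
  | negAndE2 {Γ φ ψ} : Der0 Γ (.neg (.conj φ ψ)) → Der0 Γ ψ → Der0 Γ (.neg φ)
  | negOrI {Γ φ ψ} : Der0 Γ (.neg φ) → Der0 Γ (.neg ψ) → Der0 Γ (.neg (.disj φ ψ))
  | negOrE1 {Γ φ ψ} : Der0 Γ (.neg (.disj φ ψ)) → Der0 Γ (.neg φ)
  | negOrE2 {Γ φ ψ} : Der0 Γ (.neg (.disj φ ψ)) → Der0 Γ (.neg ψ)
  | dnI {Γ φ} : Der0 Γ φ → Der0 Γ (.neg (.neg φ))
  | dnE {Γ φ} : Der0 Γ (.neg (.neg φ)) → Der0 Γ φ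
  | botI {Γ φ} : Der0 Γ φ → Der0 Γ (.neg φ) → Der0 Γ .bot
  | botE {Γ φ} : Der0 Γ .bot → Der0 Γ φ

/-- The set of subsentences of a sentence. -/
def subs : Sentence V → Set (Sentence V)
  | .var p => {Sentence.var p}
  | .bot => {Sentence.bot}
  | .neg φ => insert (.neg φ) (subs φ)
  | .conj φ ψ => insert (.conj φ ψ) (subs φ ∪ subs ψ)
  | .disj φ ψ => insert (.disj φ ψ) (subs φ ∪ subs ψ)

/-- Subsentences of a set of sentences. -/
def subsSet (Γ : Set (Sentence V)) : Set (Sentence V) := ⋃ γ ∈ Γ, subs γ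

/-- The k-depth consequence relations `Γ ⊢ₖ φ`: for `k > 0`, `Γ ⊢ₖ φ` iff there is a
subsentence `β` of `Γ ∪ {φ}` such that `Γ, β ⊢_{k-1} φ` and `Γ, ¬β ⊢_{k-1} φ`. -/
def DerK : ℕ → Set (Sentence V) → Sentence V → Prop
  | 0, Γ, φ => Der0 Γ φ
  | k+1, Γ, φ => ∃ β, β ∈ subsSet (insert φ Γ) ∧
      DerK k (insert β Γ) φ ∧ DerK k (insert (Sentence.neg β) Γ) φ

/-- Elements of `SL ∪ {*}`: `none` is the empty information `*`, `some γ` is the sentence `γ`.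
`prems` gives the corresponding set of premises. -/
def prems : Option (Sentence V) → Set (Sentence V)
  | none => ∅
  | some γ => {γ}

/-- `r ⊢₀ φ` for `r ∈ SL ∪ {*}`. -/
def Der0O (r : Option (Sentence V)) (φ : Sentence V) : Prop := Der0 (prems r) φ

/-- `r ⊢ₖ φ` for `r ∈ SL ∪ {*}`. -/
def DerKO (k : ℕ) (r : Option (Sentence V)) (φ : Sentence V) : Prop := DerK k (prems r) φ

/-- classical consequence from `r ∈ SL ∪ {*}`. -/
def CCO (r : Option (Sentence V)) (φ : Sentence V) : Prop := CC (prems r) φ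

/-- `r ⊢₀ s` where also the conclusion may be the empty information `*`
(deriving `*` is trivial). -/
def Der0OO (r : Option (Sentence V)) : Option (Sentence V) → Prop
  | none => True
  | some φ => Der0O r φ

/-! ### Depth-bounded trees -/

/-- Binary trees whose internal nodes are labelled by the branching sentence `β`:
a node with branching sentence `β` and current information `α` has children carrying
the information `α ∧ β` and `α ∧ ¬β` respectively. -/
inductive DBTree (V : Type) : Type
  | leaf : DBTree V
  | node : Sentence V → DBTree V → DBTree V → DBTree V
  deriving DecidableEq

/-- The information carried by a child of a node with information `r ∈ SL ∪ {*}` and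
branching sentence `β`: `r ∧ β` (or just `β` when `r = *`). -/
def extend (r : Option (Sentence V)) (β : Sentence V) : Option (Sentence V) :=
  some (match r with
    | none => β
    | some α => Sentence.conj α β)

/-- The set `Le(T)` of labels of the leaves of a tree `t` rooted in `r ∈ SL ∪ {*}`. -/
def leafLabels [DecidableEq V] : Option (Sentence V) → DBTree V → Finset (Option (Sentence V))
  | r, .leaf => {r}
  | r, .node β t₁ t₂ =>
      leafLabels (extend r β) t₁ ∪ leafLabels (extend r (.neg β)) t₂

/-- The number of leaves of a tree. -/
def numLeaves : DBTree V → ℕ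
  | .leaf => 1
  | .node _ t₁ t₂ => numLeaves t₁ + numLeaves t₂

/-- `Grow k t t'`: `t'` is obtained from `t` by expanding a (possibly empty) subset of the
depth-`k` leaves of `t`, each expanded leaf getting two children via some branching sentence. -/
inductive Grow : ℕ → DBTree V → DBTree V → Prop
  | keep (k : ℕ) : Grow k .leaf .leaf
  | expand (β : Sentence V) : Grow 0 .leaf (.node β .leaf .leaf)
  | node {k : ℕ} {t₁ t₁' t₂ t₂' : DBTree V} (β : Sentence V) :
      Grow k t₁ t₁' → Grow k t₂ t₂' →
      Grow (k+1) (.node β t₁ t₂) (.node β t₁' t₂')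

/-- A depth-bounded tree sequence (DBT-sequence): `T₀` is a single node, and `T_{k+1}` is
obtained from `T_k` by branching at least one node of depth `k`. -/
structure DBTSeq (V : Type) where
  tree : ℕ → DBTree V
  init : tree 0 = DBTree.leaf
  grow : ∀ k, Grow k (tree k) (tree (k+1))
  progress : ∀ k, tree (k+1) ≠ tree k

/-- `t` is a tree of depth `k` belonging to some DBT-sequence. -/
def IsDepthKTree (k : ℕ) (t : DBTree V) : Prop := ∃ S : DBTSeq V, S.tree k = t

/-- `r` decides `φ`: `r ⊢₀ φ` or `r ⊢₀ ¬φ`. -/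
def Decides (r : Option (Sentence V)) (φ : Sentence V) : Prop :=
  Der0O r φ ∨ Der0O r (.neg φ)

/-- `|dec(Γ, φ)|`: the number of elements of `Γ` deciding `φ`. -/
noncomputable def decCount [DecidableEq V] (Γ : Finset (Option (Sentence V)))
    (φ : Sentence V) : ℕ := by
  classical exact (Γ.filter (fun α => Decides α φ)).card

/-- A tree rooted in `r` is `{φ}`-closed iff all its leaves decide `φ`. -/
def TreeClosed [DecidableEq V] (r : Option (Sentence V)) (t : DBTree V) (φ : Sentence V) : Prop :=
  ∀ α ∈ leafLabels r t, Decides α φ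

/-- A tree `t` of depth `k` rooted in `r` is `{φ}`-maximal iff no depth-`k` tree with the same
root has strictly more leaves deciding `φ`. -/
def TreeMaximal [DecidableEq V] (r : Option (Sentence V)) (k : ℕ) (t : DBTree V)
    (φ : Sentence V) : Prop :=
  ∀ t' : DBTree V, IsDepthKTree k t' →
    decCount (leafLabels r t') φ ≤ decCount (leafLabels r t) φ

/-- A tree rooted in `r` is free of deep contradictions iff every classically inconsistent
leaf is already 0-depth inconsistent. -/
def TreeFreeDC [DecidableEq V] (r : Option (Sentence V)) (t : DBTree V) : Prop :=
  ∀ α ∈ leafLabels r t, CCO α Sentence.bot → Der0O α Sentence.bot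

/-! ### Depth-bounded forests -/

/-- A depth-bounded forest sequence (DBF-sequence) based on the support set
`Supp ⊆ SL ∪ {*}`: a DBT-sequence rooted in `γ` for each `γ ∈ Supp`. -/
structure DBFSeq (V : Type) where
  Supp : Finset (Option (Sentence V))
  suppNE : Supp.Nonempty
  tree : Option (Sentence V) → ℕ → DBTree V
  init : ∀ γ ∈ Supp, tree γ 0 = DBTree.leaf
  grow : ∀ γ ∈ Supp, ∀ k, Grow k (tree γ k) (tree γ (k+1))
  progress : ∀ γ ∈ Supp, ∀ k, tree γ (k+1) ≠ tree γ k

/-- `Le(F_k)`: the leaves of the depth-`k` forest of a DBF-sequence. -/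
noncomputable def DBFSeq.leaves [DecidableEq V] (F : DBFSeq V) (k : ℕ) :
    Finset (Option (Sentence V)) := by
  classical exact F.Supp.biUnion (fun γ => leafLabels γ (F.tree γ k))

/-- The depth-`k` forest is `{φ}`-closed (tree-wise). -/
def DBFSeq.Closed [DecidableEq V] (F : DBFSeq V) (k : ℕ) (φ : Sentence V) : Prop :=
  ∀ γ ∈ F.Supp, TreeClosed γ (F.tree γ k) φ

/-- The depth-`k` forest is `{φ}`-maximal (tree-wise). -/
def DBFSeq.Maximal [DecidableEq V] (F : DBFSeq V) (k : ℕ) (φ : Sentence V) : Prop :=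
  ∀ γ ∈ F.Supp, TreeMaximal γ k (F.tree γ k) φ

/-- The depth-`k` forest is free of deep contradictions (tree-wise). -/
def DBFSeq.FreeDC [DecidableEq V] (F : DBFSeq V) (k : ℕ) : Prop :=
  ∀ γ ∈ F.Supp, TreeFreeDC γ (F.tree γ k)

/-- `MassStep m m' r t t'`: the mass function `m'` refines `m` along the expansion of `t`
into `t'` (leaves keep their mass; the mass of an expanded leaf is split among its
two children). -/
inductive MassStep (m m' : Option (Sentence V) → ℝ) :
    Option (Sentence V) → DBTree V → DBTree V → Prop
  | keep {r : Option (Sentence V)} :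
      m' r = m r → MassStep m m' r .leaf .leaf
  | split {r : Option (Sentence V)} {β : Sentence V} :
      m' (extend r β) + m' (extend r (.neg β)) = m r →
      MassStep m m' r .leaf (.node β .leaf .leaf)
  | node {r : Option (Sentence V)} {β : Sentence V} {t₁ t₁' t₂ t₂' : DBTree V} :
      MassStep m m' (extend r β) t₁ t₁' →
      MassStep m m' (extend r (.neg β)) t₂ t₂' →
      MassStep m m' r (.node β t₁ t₂) (.node β t₁' t₂')

/-- A depth-bounded mass sequence (DBM-sequence): a DBF-sequence free of deep contradictions
together with probability mass functions `m_k` over `Le(F_k)` such that the mass of each leaf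
of `F_k` is either kept (if it remains a leaf) or split among its two children in `F_{k+1}`. -/
structure DBMSeq (V : Type) [DecidableEq V] extends DBFSeq V where
  m : ℕ → Option (Sentence V) → ℝ
  nonneg : ∀ k, ∀ α ∈ toDBFSeq.leaves k, 0 ≤ m k α
  total : ∀ k, ∑ α ∈ toDBFSeq.leaves k, m k α = 1
  incZero : ∀ k, ∀ α ∈ toDBFSeq.leaves k, Der0O α Sentence.bot → m k α = 0
  freeDC : ∀ k, toDBFSeq.FreeDC k
  massStep : ∀ γ ∈ toDBFSeq.Supp, ∀ k,
      MassStep (m k) (m (k+1)) γ (toDBFSeq.tree γ k) (toDBFSeq.tree γ (k+1))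

/-- The k-depth belief function `B_k(φ) = m_k(b_k(φ))` where
`b_k(φ) = {α ∈ Le(F_k) : α ⊢₀ φ, α ⊬₀ ⊥}`. -/
noncomputable def DBMSeq.B [DecidableEq V] (M : DBMSeq V) (k : ℕ) (φ : Sentence V) : ℝ := by
  classical exact ∑ α ∈ M.toDBFSeq.leaves k,
    if Der0O α φ ∧ ¬ Der0O α Sentence.bot then M.m k α else 0

/-- The k-depth plausibility function `Pl_k(φ) = m_k(pl_k(φ))` where
`pl_k(φ) = {α ∈ Le(F_k) : α ⊬₀ ¬φ}`. -/
noncomputable def DBMSeq.Pl [DecidableEq V] (M : DBMSeq V) (k : ℕ) (φ : Sentence V) : ℝ := by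
  classical exact ∑ α ∈ M.toDBFSeq.leaves k,
    if ¬ Der0O α (Sentence.neg φ) then M.m k α else 0

/-! ### Auxiliary notions -/

/-- A probability function on `SL`: a `[0,1]`-valued function which is normalised on
classical tautologies and additive on classically incompatible disjuncts. -/
def IsProbability (P : Sentence V → ℝ) : Prop :=
  (∀ φ, 0 ≤ P φ ∧ P φ ≤ 1) ∧
  (∀ φ, CC (∅ : Set (Sentence V)) φ → P φ = 1) ∧
  (∀ φ ψ, CC (∅ : Set (Sentence V)) (.neg (.conj φ ψ)) →
    P (.disj φ ψ) = P φ + P ψ)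

/-- The literal on `p` prescribed by the valuation `v`. -/
def litOf (v : V → Bool) (p : V) : Sentence V :=
  if v p then .var p else .neg (.var p)

/-- Left-associated conjunction `φ ∧ ψ₁ ∧ ⋯ ∧ ψₙ`. -/
def listConj : Sentence V → List (Sentence V) → Sentence V
  | φ, [] => φ
  | φ, ψ :: l => listConj (.conj φ ψ) l

/-- Left-associated disjunction `φ ∨ ψ₁ ∨ ⋯ ∨ ψₙ`. -/
def listDisj : Sentence V → List (Sentence V) → Sentence V
  | φ, [] => φ
  | φ, ψ :: l => listDisj (.disj φ ψ) l

/-- Conjunction of a list of sentences (`⊥` for the empty list, which is never used). -/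
def conjList : List (Sentence V) → Sentence V
  | [] => .bot
  | ψ :: l => listConj ψ l

/-- Disjunction of a list of sentences (`⊥` for the empty list, which is never used). -/
def disjList : List (Sentence V) → Sentence V
  | [] => .bot
  | ψ :: l => listDisj ψ l

/-- `α` is an atom of the language: a maximal (classically consistent) conjunction of
literals, with exactly one literal per propositional variable. -/
def IsAtom (α : Sentence V) : Prop :=
  ∃ (v : V → Bool) (l : List V), l.Nodup ∧ (∀ p : V, p ∈ l) ∧ l ≠ [] ∧
    α = conjList (l.map (litOf v))

/-- The conjunction `⋀_{i ∈ S} φ_i` of a finite set of indexed sentences. -/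
def finsetConj {n : ℕ} (φ : Fin n → Sentence V) (S : Finset (Fin n)) : Sentence V :=
  conjList ((S.sort (· ≤ ·)).map φ)

/-- The finite set of subsentences of a sentence. -/
def subsF [DecidableEq V] : Sentence V → Finset (Sentence V)
  | .var p => {Sentence.var p}
  | .bot => {Sentence.bot}
  | .neg φ => insert (.neg φ) (subsF φ)
  | .conj φ ψ => insert (.conj φ ψ) (subsF φ ∪ subsF ψ)
  | .disj φ ψ => insert (.disj φ ψ) (subsF φ ∪ subsF ψ)

/-- All branching sentences of the tree belong to `S`. -/
def BranchesIn [DecidableEq V] : DBTree V → Finset (Sentence V) → Prop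
  | .leaf, _ => True
  | .node β t₁ t₂, S => β ∈ S ∧ BranchesIn t₁ S ∧ BranchesIn t₂ S


/-! ### Auxiliary lemmas for Statement 10 -/

section Aux

/-- Cut/weakening for `Der0`. -/
theorem der0_cut {Γ Δ : Set (Sentence V)} {φ : Sentence V}
    (h : Der0 Γ φ) (hΔ : ∀ γ ∈ Γ, Der0 Δ γ) : Der0 Δ φ := by
  induction h with
  | prem h => exact hΔ _ h
  | andI _ _ ih1 ih2 => exact .andI ih1 ih2
  | andE1 _ ih => exact .andE1 ih
  | andE2 _ ih => exact .andE2 ih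
  | orI1 _ ih => exact .orI1 ih
  | orI2 _ ih => exact .orI2 ih
  | orE1 _ _ ih1 ih2 => exact .orE1 ih1 ih2
  | orE2 _ _ ih1 ih2 => exact .orE2 ih1 ih2
  | negAndI1 _ ih => exact .negAndI1 ih
  | negAndI2 _ ih => exact .negAndI2 ih
  | negAndE1 _ _ ih1 ih2 => exact .negAndE1 ih1 ih2
  | negAndE2 _ _ ih1 ih2 => exact .negAndE2 ih1 ih2
  | negOrI _ _ ih1 ih2 => exact .negOrI ih1 ih2
  | negOrE1 _ ih => exact .negOrE1 ih
  | negOrE2 _ ih => exact .negOrE2 ih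
  | dnI _ ih => exact .dnI ih
  | dnE _ ih => exact .dnE ih
  | botI _ _ ih1 ih2 => exact .botI ih1 ih2
  | botE _ ih => exact .botE ih

theorem der0O_extend {r : Option (Sentence V)} {β ψ : Sentence V}
    (h : Der0O r ψ) : Der0O (extend r β) ψ := by
  cases r with
  | none =>
      exact der0_cut h (fun γ hγ => absurd hγ (Set.notMem_empty _))
  | some a =>
      refine der0_cut h (fun γ hγ => ?_)
      have hg : γ = a := hγ
      subst hg
      exact Der0.andE1 (Der0.prem rfl)

theorem decides_extend {r : Option (Sentence V)} {β φ : Sentence V}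
    (h : Decides r φ) : Decides (extend r β) φ :=
  h.imp der0O_extend der0O_extend

/-- Left conjunction spine. -/
inductive Spine : Sentence V → Sentence V → Prop
  | refl (s : Sentence V) : Spine s s
  | step {s a : Sentence V} (b : Sentence V) : Spine s a → Spine s (.conj a b)

theorem spine_size {s ℓ : Sentence V} (h : Spine s ℓ) : sizeOf s ≤ sizeOf ℓ := by
  induction h with
  | refl => exact le_refl _
  | step b _ ih => simp; omega

theorem spine_trans {a b c : Sentence V} (h1 : Spine a b) (h2 : Spine b c) : Spine a c := by
  induction h2 with
  | refl => exact h1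
  | step d _ ih => exact ih.step d

theorem spine_total {a b ℓ : Sentence V} (h1 : Spine a ℓ) : Spine b ℓ → Spine a b ∨ Spine b a := by
  induction h1 with
  | refl => exact fun h2 => Or.inr h2
  | step c h ih =>
      intro h2
      cases h2 with
      | refl => exact Or.inl (h.step c)
      | step _ h2' => exact ih h2'

theorem neg_ne (β : Sentence V) : Sentence.neg β ≠ β := by
  intro h
  have := congrArg sizeOf h
  simp at this

theorem labels_spine [DecidableEq V] {t : DBTree V} :
    ∀ {s : Sentence V} {x : Option (Sentence V)},
      x ∈ leafLabels (some s) t → ∃ u, x = some u ∧ Spine s u := by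
  induction t with
  | leaf =>
      intro s x hx
      simp [leafLabels] at hx
      exact ⟨s, hx, Spine.refl s⟩
  | node β t1 t2 ih1 ih2 =>
      intro s x hx
      simp only [leafLabels, Finset.mem_union] at hx
      rcases hx with hx | hx
      · obtain ⟨u, rfl, hsp⟩ := ih1 (s := .conj s β) hx
        exact ⟨u, rfl, spine_trans ((Spine.refl s).step β) hsp⟩
      · obtain ⟨u, rfl, hsp⟩ := ih2 (s := .conj s (.neg β)) hx
        exact ⟨u, rfl, spine_trans ((Spine.refl s).step (.neg β)) hsp⟩

theorem leafLabels_disjoint [DecidableEq V] (r : Option (Sentence V)) (β : Sentence V)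
    (t1 t2 : DBTree V) :
    Disjoint (leafLabels (extend r β) t1) (leafLabels (extend r (.neg β)) t2) := by
  rw [Finset.disjoint_left]
  intro x h1 h2
  cases r with
  | none =>
      obtain ⟨u, rfl, s1⟩ := labels_spine (s := β) h1
      obtain ⟨u2, hu2, s2⟩ := labels_spine (s := .neg β) h2
      obtain rfl : u = u2 := Option.some.inj hu2
      rcases spine_total s1 s2 with h | h
      · cases h
      · have := spine_size h
        simp at this
  | some a =>
      obtain ⟨u, rfl, s1⟩ := labels_spine (s := .conj a β) h1
      obtain ⟨u2, hu2, s2⟩ := labels_spine (s := .conj a (.neg β)) h2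
      obtain rfl : u = u2 := Option.some.inj hu2
      rcases spine_total s1 s2 with h | h
      · cases h with
        | step _ h' => have := spine_size h'; simp at this; omega
      · cases h with
        | step _ h' => have := spine_size h'; simp at this; omega

end Aux

section Aux2

theorem extend_ne (r : Option (Sentence V)) (β : Sentence V) :
    extend r β ≠ extend r (.neg β) := by
  cases r with
  | none =>
      intro h
      exact neg_ne β (Option.some.inj h).symm
  | some a =>
      intro h
      have h2 := Option.some.inj h
      injection h2 with h3 h4
      exact neg_ne β h4.symm

theorem sum_leafLabels_node [DecidableEq V] (f : Option (Sentence V) → ℝ)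
    (r : Option (Sentence V)) (β : Sentence V) (t1 t2 : DBTree V) :
    ∑ x ∈ leafLabels r (.node β t1 t2), f x
      = ∑ x ∈ leafLabels (extend r β) t1, f x
        + ∑ x ∈ leafLabels (extend r (.neg β)) t2, f x := by
  show ∑ x ∈ leafLabels (extend r β) t1 ∪ leafLabels (extend r (.neg β)) t2, f x = _
  rw [Finset.sum_union (leafLabels_disjoint r β t1 t2)]

theorem leafLabels_split [DecidableEq V] (r : Option (Sentence V)) (β : Sentence V) :
    leafLabels r (.node β .leaf .leaf) = {extend r β, extend r (.neg β)} := by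
  show ({extend r β} : Finset _) ∪ {extend r (.neg β)} = _
  ext x; simp

/-- Per-tree total mass preservation along a `MassStep`. -/
theorem massStep_sum [DecidableEq V] {m m' : Option (Sentence V) → ℝ}
    {r : Option (Sentence V)} {t t' : DBTree V} (h : MassStep m m' r t t') :
    ∑ x ∈ leafLabels r t', m' x = ∑ x ∈ leafLabels r t, m x := by
  induction h with
  | keep he => simpa [leafLabels] using he
  | @split r β he =>
      rw [leafLabels_split, Finset.sum_pair (extend_ne r β)]
      simpa [leafLabels] using he
  | node h1 h2 ih1 ih2 =>
      rw [sum_leafLabels_node, sum_leafLabels_node, ih1, ih2]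

open Classical in
/-- The summand of the belief function. -/
noncomputable def Gfun (φ : Sentence V) (f : Option (Sentence V) → ℝ)
    (x : Option (Sentence V)) : ℝ :=
  if Der0O x φ ∧ ¬ Der0O x Sentence.bot then f x else 0

/-- Per-tree class-mass preservation along a `MassStep`, under closedness. -/
theorem massStep_class_sum [DecidableEq V] {m m' : Option (Sentence V) → ℝ} {φ : Sentence V}
    {r : Option (Sentence V)} {t t' : DBTree V} (h : MassStep m m' r t t')
    (hdec : ∀ α ∈ leafLabels r t, Decides α φ)
    (hinc : ∀ α ∈ leafLabels r t', Der0O α Sentence.bot → m' α = 0) :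
    ∑ x ∈ leafLabels r t', Gfun φ m' x = ∑ x ∈ leafLabels r t, Gfun φ m x := by
  induction h with
  | @keep r he =>
      simp only [leafLabels, Finset.sum_singleton, Gfun, he]
  | @split r β he =>
      have hsplit := leafLabels_split r β
      have hd : Decides r φ := hdec r (by simp [leafLabels])
      have h1m : extend r β ∈ leafLabels r (DBTree.node β .leaf .leaf) := by
        rw [hsplit]; simp
      have h2m : extend r (.neg β) ∈ leafLabels r (DBTree.node β .leaf .leaf) := by
        rw [hsplit]; simp
      rw [hsplit, Finset.sum_pair (extend_ne r β)]
      simp only [leafLabels, Finset.sum_singleton]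
      by_cases hb : Der0O r Sentence.bot
      · have hb1 : Der0O (extend r β) Sentence.bot := der0O_extend hb
        have hb2 : Der0O (extend r (.neg β)) Sentence.bot := der0O_extend hb
        simp [Gfun, hb, hb1, hb2]
      · by_cases hφ : Der0O r φ
        · have hφ1 : Der0O (extend r β) φ := der0O_extend hφ
          have hφ2 : Der0O (extend r (.neg β)) φ := der0O_extend hφ
          have e1 : Gfun φ m' (extend r β) = m' (extend r β) := by
            by_cases hc : Der0O (extend r β) Sentence.bot
            · simp [Gfun, hc, hinc _ h1m hc]
            · simp [Gfun, hφ1, hc]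
          have e2 : Gfun φ m' (extend r (.neg β)) = m' (extend r (.neg β)) := by
            by_cases hc : Der0O (extend r (.neg β)) Sentence.bot
            · simp [Gfun, hc, hinc _ h2m hc]
            · simp [Gfun, hφ2, hc]
          rw [e1, e2, he]
          simp [Gfun, hφ, hb]
        · have hnφ : Der0O r (.neg φ) := hd.resolve_left hφ
          have key : ∀ γ : Option (Sentence V), Der0O γ (.neg φ) → Gfun φ m' γ = 0 := by
            intro γ hγ
            by_cases hc : Der0O γ φ
            · have : Der0O γ Sentence.bot := Der0.botI hc hγ
              simp [Gfun, this]
            · simp [Gfun, hc]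
          rw [key _ (der0O_extend hnφ), key _ (der0O_extend hnφ)]
          simp [Gfun, hφ]
  | node h1 h2 ih1 ih2 =>
      rw [sum_leafLabels_node, sum_leafLabels_node]
      rw [ih1 (fun α hα => hdec α (Finset.mem_union_left _ hα))
            (fun α hα => hinc α (Finset.mem_union_left _ hα)),
          ih2 (fun α hα => hdec α (Finset.mem_union_right _ hα))
            (fun α hα => hinc α (Finset.mem_union_right _ hα))]

end Aux2

section Aux3

theorem sum_sum_eq_mult {ι X : Type*} [DecidableEq X] (I : Finset ι) (s : ι → Finset X)
    (h : X → ℝ) :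
    ∑ i ∈ I, ∑ x ∈ s i, h x
      = ∑ x ∈ I.biUnion s, ((I.filter fun i => x ∈ s i).card : ℝ) * h x := by
  classical
  have step1 : ∀ i ∈ I, ∑ x ∈ s i, h x = ∑ x ∈ I.biUnion s, if x ∈ s i then h x else 0 := by
    intro i hi
    rw [Finset.sum_ite_mem, Finset.inter_eq_right.mpr (Finset.subset_biUnion_of_mem s hi)]
  rw [Finset.sum_congr rfl step1, Finset.sum_comm]
  refine Finset.sum_congr rfl fun x hx => ?_
  rw [Finset.sum_ite, Finset.sum_const_zero, add_zero, Finset.sum_const, nsmul_eq_mul]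

theorem mult_transfer {ι X : Type*} [DecidableEq X] (I : Finset ι) (s : ι → Finset X)
    (h g : X → ℝ)
    (hnn : ∀ x ∈ I.biUnion s, 0 ≤ h x)
    (heq : ∑ i ∈ I, ∑ x ∈ s i, h x = ∑ x ∈ I.biUnion s, h x)
    (hg : ∀ x ∈ I.biUnion s, g x = 0 ∨ g x = h x) :
    ∑ i ∈ I, ∑ x ∈ s i, g x = ∑ x ∈ I.biUnion s, g x := by
  classical
  rw [sum_sum_eq_mult] at heq ⊢
  have hzero : ∀ x ∈ I.biUnion s, (((I.filter fun i => x ∈ s i).card : ℝ) - 1) * h x = 0 := by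
    have hsum : ∑ x ∈ I.biUnion s,
        (((I.filter fun i => x ∈ s i).card : ℝ) - 1) * h x = 0 := by
      simp only [sub_mul, one_mul]
      rw [Finset.sum_sub_distrib, heq, sub_self]
    have hterm : ∀ y ∈ I.biUnion s,
        0 ≤ (((I.filter fun i => y ∈ s i).card : ℝ) - 1) * h y := by
      intro y hy
      have hc : 1 ≤ (I.filter fun i => y ∈ s i).card := by
        obtain ⟨i, hi, hyi⟩ := Finset.mem_biUnion.mp hy
        exact Finset.card_pos.mpr ⟨i, Finset.mem_filter.mpr ⟨hi, hyi⟩⟩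
      have hc' : (1:ℝ) ≤ ((I.filter fun i => y ∈ s i).card : ℝ) := by exact_mod_cast hc
      exact mul_nonneg (by linarith) (hnn y hy)
    exact fun x hx => (Finset.sum_eq_zero_iff_of_nonneg hterm).mp hsum x hx
  refine Finset.sum_congr rfl fun x hx => ?_
  rcases hg x hx with h0 | hgx
  · rw [h0, mul_zero]
  · rw [hgx]; linear_combination hzero x hx

theorem grow_labels [DecidableEq V] {k : ℕ} {t t' : DBTree V} (h : Grow k t t') :
    ∀ (r : Option (Sentence V)) (x), x ∈ leafLabels r t' →
      x ∈ leafLabels r t ∨ ∃ α ∈ leafLabels r t, ∃ β, x = extend α β := by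
  induction h with
  | keep k => exact fun r x hx => Or.inl hx
  | expand β =>
      intro r x hx
      rw [leafLabels_split] at hx
      rcases Finset.mem_insert.mp hx with rfl | hx
      · exact Or.inr ⟨r, by simp [leafLabels], β, rfl⟩
      · rw [Finset.mem_singleton] at hx; subst hx
        exact Or.inr ⟨r, by simp [leafLabels], .neg β, rfl⟩
  | @node k t1 t1' t2 t2' β h1 h2 ih1 ih2 =>
      intro r x hx
      simp only [leafLabels] at hx ⊢
      rcases Finset.mem_union.mp hx with hx | hx
      · rcases ih1 (extend r β) x hx with h' | ⟨α, hα, β', rfl⟩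
        · exact Or.inl (Finset.mem_union_left _ h')
        · exact Or.inr ⟨α, Finset.mem_union_left _ hα, β', rfl⟩
      · rcases ih2 (extend r (.neg β)) x hx with h' | ⟨α, hα, β', rfl⟩
        · exact Or.inl (Finset.mem_union_right _ h')
        · exact Or.inr ⟨α, Finset.mem_union_right _ hα, β', rfl⟩

end Aux3

section Main

variable [DecidableEq V]

theorem leaves_eq (M : DBMSeq V) (k : ℕ) :
    M.toDBFSeq.leaves k = M.Supp.biUnion (fun γ => leafLabels γ (M.tree γ k)) := rfl

theorem tree_total (M : DBMSeq V) {γ : Option (Sentence V)} (hγ : γ ∈ M.Supp) (k : ℕ) :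
    ∑ x ∈ leafLabels γ (M.tree γ k), M.m k x = M.m 0 γ := by
  induction k with
  | zero => rw [M.init γ hγ]; simp [leafLabels]
  | succ n ih => rw [massStep_sum (M.massStep γ hγ n), ih]

theorem leaves_zero (M : DBMSeq V) : M.toDBFSeq.leaves 0 = M.Supp := by
  ext x
  rw [leaves_eq, Finset.mem_biUnion]
  constructor
  · rintro ⟨γ, hγ, hx⟩
    rw [M.init γ hγ] at hx
    simp [leafLabels] at hx
    subst hx
    exact hγ
  · intro hx
    exact ⟨x, hx, by rw [M.init x hx]; simp [leafLabels]⟩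

theorem tree_sum_total (M : DBMSeq V) (k : ℕ) :
    ∑ γ ∈ M.Supp, ∑ x ∈ leafLabels γ (M.tree γ k), M.m k x
      = ∑ x ∈ M.Supp.biUnion (fun γ => leafLabels γ (M.tree γ k)), M.m k x := by
  rw [← leaves_eq, M.total k]
  calc ∑ γ ∈ M.Supp, ∑ x ∈ leafLabels γ (M.tree γ k), M.m k x
      = ∑ γ ∈ M.Supp, M.m 0 γ := Finset.sum_congr rfl fun γ hγ => tree_total M hγ k
    _ = ∑ x ∈ M.toDBFSeq.leaves 0, M.m 0 x := by rw [leaves_zero]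
    _ = 1 := M.total 0

theorem B_eq (M : DBMSeq V) (k : ℕ) (φ : Sentence V) :
    M.B k φ = ∑ x ∈ M.toDBFSeq.leaves k, Gfun φ (M.m k) x := by
  classical
  refine Finset.sum_congr rfl fun x _ => ?_
  exact if_congr Iff.rfl rfl rfl

theorem B_tree (M : DBMSeq V) (k : ℕ) (φ : Sentence V) :
    M.B k φ = ∑ γ ∈ M.Supp, ∑ x ∈ leafLabels γ (M.tree γ k), Gfun φ (M.m k) x := by
  rw [B_eq, leaves_eq]
  refine (mult_transfer M.Supp (fun γ => leafLabels γ (M.tree γ k)) (M.m k)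
      (Gfun φ (M.m k)) ?_ ?_ ?_).symm
  · intro x hx
    exact M.nonneg k x (by rw [leaves_eq]; exact hx)
  · exact tree_sum_total M k
  · intro x _
    unfold Gfun
    split
    · exact Or.inr rfl
    · exact Or.inl rfl

theorem closed_succ (M : DBMSeq V) {k : ℕ} {φ : Sentence V} (h : M.toDBFSeq.Closed k φ) :
    M.toDBFSeq.Closed (k+1) φ := by
  intro γ hγ α hα
  rcases grow_labels (M.grow γ hγ k) γ α hα with h' | ⟨α₀, h₀, β, rfl⟩
  · exact h γ hγ α h'
  · exact decides_extend (h γ hγ α₀ h₀)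

end Main

/-- For a DBM-sequence free of deep contradictions, if `F_j` is `{φ}`-closed,
then `B_k(φ) = B_j(φ)` for every `k ≥ j`. -/
theorem belief_stable_of_closed {V : Type} [DecidableEq V] [Fintype V]
    (M : DBMSeq V) (φ : Sentence V) (j : ℕ)
    (hcl : M.toDBFSeq.Closed j φ) :
    ∀ k, j ≤ k → M.B k φ = M.B j φ := by
  have step : ∀ n, M.toDBFSeq.Closed n φ → M.B (n+1) φ = M.B n φ := by
    intro n hc
    rw [B_tree M (n+1) φ, B_tree M n φ]
    refine Finset.sum_congr rfl fun γ hγ => ?_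
    refine massStep_class_sum (M.massStep γ hγ n) (hc γ hγ) (fun α hα hb => ?_)
    refine M.incZero (n+1) α ?_ hb
    rw [leaves_eq]
    exact Finset.mem_biUnion.mpr ⟨γ, hγ, hα⟩
  intro k hk
  induction k, hk using Nat.le_induction with
  | base => rfl
  | succ n hn ih =>
      have hcn : M.toDBFSeq.Closed n φ := by
        clear ih
        induction n, hn using Nat.le_induction with
        | base => exact hcl
        | succ m hm ih2 => exact closed_succ M ih2
      rw [step n hcn, ih]

end DBB
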